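/- arXiv:2212.09842 — 2 statements merged into one kernel-verified Lean document; each statement's English description precedes it below -/
import Mathlib

section
/- For every a ∈ [0,1), setting α = 1 − a, there exists an α-Hölder continuous map φ : [0,1] → [0,1] such that the lower metric mean dimension and the upper metric mean dimension of ([0,1], |·|, φ) are both equal to a. -/
open Filter Set Topology

noncomputable section

/-- `sep(n,φ,ε)`: the maximal cardinality of an `(n,φ,ε)`-separated set with respect to
the metric `d`, where a set `A` is `(n,φ,ε)`-separated if for all distinct `x, y ∈ A`
one has `max_{0 ≤ i < n} d(φ^i x, φ^i y) > ε`. -/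
def sepNum {X : Type*} (d : X → X → ℝ) (φ : X → X) (n : ℕ) (ε : ℝ) : ℕ :=
  sSup {m : ℕ | ∃ A : Finset X,
    (∀ x ∈ A, ∀ y ∈ A, x ≠ y → ∃ i < n, ε < d (φ^[i] x) (φ^[i] y)) ∧ A.card = m}

/-- `sep(φ,ε) = limsup_{n→∞} (1/n) log sep(n,φ,ε)`. -/
def sepExp {X : Type*} (d : X → X → ℝ) (φ : X → X) (ε : ℝ) : ℝ :=
  Filter.limsup (fun n : ℕ => Real.log (sepNum d φ n ε) / n) Filter.atTop

/-- The lower metric mean dimension: `liminf_{ε→0⁺} sep(φ,ε)/|log ε|`. -/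
def mdimLower {X : Type*} (d : X → X → ℝ) (φ : X → X) : ℝ :=
  Filter.liminf (fun ε : ℝ => sepExp d φ ε / |Real.log ε|) (nhdsWithin 0 (Set.Ioi 0))

/-- The upper metric mean dimension: `limsup_{ε→0⁺} sep(φ,ε)/|log ε|`. -/
def mdimUpper {X : Type*} (d : X → X → ℝ) (φ : X → X) : ℝ :=
  Filter.limsup (fun ε : ℝ => sepExp d φ ε / |Real.log ε|) (nhdsWithin 0 (Set.Ioi 0))

/-- The metric `d(x,y) = |x - y|` on `[0,1]`. -/
def dI : unitInterval → unitInterval → ℝ := fun x y => |(x : ℝ) - (y : ℝ)|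

/-!
On each dyadic interval `[l, 2 l] ⊆ (0, 1]` the map is a zigzag with `N ≈ l ^ (-a / (1 - a))`
monotone laps of width `w = l / N`, fixing both ends; this choice keeps `N * w ^ a` between two
constants. On one interval the map moves pairs of points by at most
`min (N |x - y|) l = N min |x - y| w ≤ N w ^ a |x - y| ^ (1 - a)`, and the fixed endpoints glue
these Hölder bounds together.

At scale `ε`, an `(n, ε)`-separated set has at most one point in the invariant interval
`[0, 2 ^ ⌊log₂ ε⌋]` and meets each of the `O(|log ε|)` remaining dyadic intervals in at most
`max (N ^ (n - 1) / ε + 1, (l / ε + 1) ^ n)` points; both `N` (when `ε ≤ w`) and `l / ε`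
(when `w < ε`) are `O(ε ^ (-a))`, so `sep(φ, ε) ≤ a |log ε| + O(1)`. Conversely, on the interval
whose lap width is comparable to `ε`, laps a bounded number apart are the branches of a horseshoe
with `≳ N ≳ ε ^ (-a)` branches, so `sep(φ, ε) ≥ a |log ε| - O(1)`.
-/

/-- `sepNum d φ n ε` is by definition the supremum of the cardinalities of these sets. -/
def IsOrbitSeparated {X : Type*} (d : X → X → ℝ) (φ : X → X) (n : ℕ) (ε : ℝ)
    (A : Finset X) : Prop :=
  ∀ x ∈ A, ∀ y ∈ A, x ≠ y → ∃ i < n, ε < d (φ^[i] x) (φ^[i] y)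

theorem dist_iterate_le_pow_mul {X : Type*} [PseudoMetricSpace X] {φ : X → X} {S : Set X}
    {L : ℝ} (hS : MapsTo φ S S) (hL : 0 ≤ L)
    (hlip : ∀ x ∈ S, ∀ y ∈ S, dist (φ x) (φ y) ≤ L * dist x y) {x y : X} (hx : x ∈ S)
    (hy : y ∈ S) (i : ℕ) : dist (φ^[i] x) (φ^[i] y) ≤ L ^ i * dist x y := by
  induction i with
  | zero => simp
  | succ i ih =>
    rw [Function.iterate_succ_apply', Function.iterate_succ_apply', pow_succ', mul_assoc]
    exact (hlip _ (hS.iterate i hx) _ (hS.iterate i hy)).trans (mul_le_mul_of_nonneg_left ih hL)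

namespace IsOrbitSeparated

variable {X : Type*} {d : X → X → ℝ} {φ : X → X} {n : ℕ} {ε : ℝ} {A : Finset X}

theorem mono {B : Finset X} (hA : IsOrbitSeparated d φ n ε A) (hBA : B ⊆ A) :
    IsOrbitSeparated d φ n ε B :=
  fun x hx y hy hxy => hA x (hBA hx) y (hBA hy) hxy

/-- The sequence of cells visited at the times `i < n` determines a point of `A`. -/
theorem card_le_pow {S : Set X} {c : X → ℕ} {P : ℕ} (hA : IsOrbitSeparated d φ n ε A)
    (horb : ∀ x ∈ A, ∀ i < n, φ^[i] x ∈ S) (hc : ∀ x ∈ S, c x < P)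
    (hcell : ∀ x ∈ S, ∀ y ∈ S, c x = c y → d x y ≤ ε) : A.card ≤ P ^ n := by
  classical
  have hinj : Set.InjOn (fun x (i : Fin n) => c (φ^[i] x)) A := by
    intro x hx y hy hxy
    by_contra hne
    obtain ⟨i, hi, hgt⟩ := hA x hx y hy hne
    have := hcell _ (horb x hx i hi) _ (horb y hy i hi) (congrFun hxy ⟨i, hi⟩)
    linarith
  calc A.card ≤ (Fintype.piFinset fun _ : Fin n => Finset.range P).card :=
        Finset.card_le_card_of_injOn _ (fun x hx => Fintype.mem_piFinset.2 fun i =>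
          Finset.mem_range.2 (hc _ (horb x hx i i.2))) hinj
    _ = P ^ n := by simp

theorem of_lipschitzOn [PseudoMetricSpace X] {S : Set X} {L : ℝ}
    (hA : IsOrbitSeparated dist φ n ε A) (hAS : ∀ x ∈ A, x ∈ S) (hS : MapsTo φ S S)
    (hL : 1 ≤ L) (hlip : ∀ x ∈ S, ∀ y ∈ S, dist (φ x) (φ y) ≤ L * dist x y) :
    IsOrbitSeparated dist φ 1 (ε / L ^ (n - 1)) A := by
  intro x hx y hy hxy
  obtain ⟨i, hi, hgt⟩ := hA x hx y hy hxy
  refine ⟨0, one_pos, ?_⟩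
  rw [div_lt_iff₀' (by positivity)]
  calc ε < L ^ i * dist x y :=
        hgt.trans_le (dist_iterate_le_pow_mul hS (by linarith) hlip (hAS x hx) (hAS y hy) i)
    _ ≤ L ^ (n - 1) * dist x y :=
        mul_le_mul_of_nonneg_right (pow_le_pow_right₀ hL (by omega)) dist_nonneg

theorem map_iff {Y : Type*} {d' : Y → Y → ℝ} {ψ : Y → Y} (e : X ↪ Y)
    (he : ∀ x y, d' (e x) (e y) = d x y) (hconj : Function.Semiconj e φ ψ) :
    IsOrbitSeparated d' ψ n ε (A.map e) ↔ IsOrbitSeparated d φ n ε A := by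
  have key : ∀ i x, ψ^[i] (e x) = e (φ^[i] x) := fun i x => ((hconj.iterate_right i).eq x).symm
  simp only [IsOrbitSeparated, Finset.forall_mem_map, e.injective.ne_iff, key, he]

end IsOrbitSeparated

/-- Cells: the intervals `[u + k ε, u + (k + 1) ε)`. -/
theorem IsOrbitSeparated.card_le_of_iterate_mem_Icc {φ : ℝ → ℝ} {n : ℕ} {ε u v : ℝ}
    {A : Finset ℝ} (hA : IsOrbitSeparated dist φ n ε A) (hε : 0 < ε) (huv : u ≤ v)
    (horb : ∀ x ∈ A, ∀ i < n, φ^[i] x ∈ Icc u v) : (A.card : ℝ) ≤ ((v - u) / ε + 1) ^ n := by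
  have hcard := hA.card_le_pow (c := fun x => ⌊(x - u) / ε⌋₊) (P := ⌊(v - u) / ε⌋₊ + 1) horb
    (fun x hx => Nat.lt_succ_of_le (Nat.floor_le_floor
      (div_le_div_of_nonneg_right (by linarith [hx.2]) hε.le)))
    (fun x hx y hy hxy => by
      have h := Int.abs_sub_lt_one_of_floor_eq_floor (a := (x - u) / ε) (b := (y - u) / ε) (by
        rw [← Int.natCast_floor_eq_floor (div_nonneg (sub_nonneg.2 hx.1) hε.le),
          ← Int.natCast_floor_eq_floor (div_nonneg (sub_nonneg.2 hy.1) hε.le), hxy])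
      rw [← sub_div, sub_sub_sub_cancel_right, abs_div, abs_of_pos hε, div_lt_one hε] at h
      exact (Real.dist_eq x y).trans_le h.le)
  calc (A.card : ℝ) ≤ ((⌊(v - u) / ε⌋₊ + 1 : ℕ) : ℝ) ^ n := by exact_mod_cast hcard
    _ ≤ ((v - u) / ε + 1) ^ n := by
        gcongr
        push_cast
        linarith [Nat.floor_le (div_nonneg (sub_nonneg.2 huv) hε.le)]

/-- `g (σ 0) (g (σ 1) (⋯ (g (σ (n - 1)) y₀)))`: when the `g s` are inverse branches of `φ`,
its `i`-th iterate lies in the range of `g (σ i)`. -/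
def itineraryPoint {X : Type*} {M : ℕ} (g : Fin M → X → X) (y₀ : X) :
    (n : ℕ) → (Fin n → Fin M) → X
  | 0, _ => y₀
  | n + 1, σ => g (σ 0) (itineraryPoint g y₀ n (Fin.tail σ))

section Horseshoe

variable {X : Type*} {M : ℕ} {φ : X → X} {J : Set X} {g : Fin M → X → X} {y₀ : X}

theorem itineraryPoint_mem (hg : ∀ s, MapsTo (g s) J J) (hy₀ : y₀ ∈ J) :
    ∀ n σ, itineraryPoint g y₀ n σ ∈ J
  | 0, _ => hy₀
  | n + 1, σ => hg (σ 0) (itineraryPoint_mem hg hy₀ n (Fin.tail σ))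

theorem iterate_itineraryPoint (hg : ∀ s, MapsTo (g s) J J) (hφ : ∀ s, ∀ y ∈ J, φ (g s y) = y)
    (hy₀ : y₀ ∈ J) : ∀ n σ (i : Fin n), ∃ y ∈ J, φ^[i] (itineraryPoint g y₀ n σ) = g (σ i) y
  | 0, _, i => i.elim0
  | n + 1, σ, i => by
    refine Fin.cases ⟨_, itineraryPoint_mem hg hy₀ n (Fin.tail σ), rfl⟩ (fun i => ?_) i
    obtain ⟨y, hy, h⟩ := iterate_itineraryPoint hg hφ hy₀ n (Fin.tail σ) i
    refine ⟨y, hy, ?_⟩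
    rw [Fin.val_succ, Function.iterate_succ_apply, itineraryPoint,
      hφ _ _ (itineraryPoint_mem hg hy₀ n _), h, Fin.tail]

theorem exists_isOrbitSeparated_of_inverse_branches [PseudoMetricSpace X] {ε : ℝ} (hε : 0 ≤ ε)
    (hg : ∀ s, MapsTo (g s) J J) (hφ : ∀ s, ∀ y ∈ J, φ (g s y) = y) (hy₀ : y₀ ∈ J)
    (hsep : ∀ s t, s ≠ t → ∀ y ∈ J, ∀ z ∈ J, ε < dist (g s y) (g t z)) (n : ℕ) :
    ∃ A : Finset X, (A : Set X) ⊆ J ∧ IsOrbitSeparated dist φ n ε A ∧ A.card = M ^ n := by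
  classical
  have hdist : ∀ σ τ, σ ≠ τ → ∃ i < n,
      ε < dist (φ^[i] (itineraryPoint g y₀ n σ)) (φ^[i] (itineraryPoint g y₀ n τ)) := by
    intro σ τ hστ
    obtain ⟨i, hi⟩ := Function.ne_iff.1 hστ
    obtain ⟨y, hy, hσ⟩ := iterate_itineraryPoint hg hφ hy₀ n σ i
    obtain ⟨z, hz, hτ⟩ := iterate_itineraryPoint hg hφ hy₀ n τ i
    exact ⟨i, i.2, by rw [hσ, hτ]; exact hsep _ _ hi y hy z hz⟩
  have hinj : Function.Injective (itineraryPoint g y₀ n) := by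
    intro σ τ h
    by_contra hστ
    obtain ⟨i, -, hi⟩ := hdist σ τ hστ
    rw [h, dist_self] at hi
    linarith
  refine ⟨Finset.univ.image (itineraryPoint g y₀ n), ?_, ?_, ?_⟩
  · simpa [Set.subset_def] using itineraryPoint_mem hg hy₀ n
  · simp only [IsOrbitSeparated, Finset.mem_image, Finset.mem_univ, true_and]
    rintro _ ⟨σ, rfl⟩ _ ⟨τ, rfl⟩ h
    exact hdist σ τ fun h' => h (h' ▸ rfl)
  · rw [Finset.card_image_of_injective _ hinj, Finset.card_univ, Fintype.card_fun,
      Fintype.card_fin, Fintype.card_fin]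

end Horseshoe

section SepExp

variable {X : Type*} {d : X → X → ℝ} {φ : X → X} {n : ℕ} {ε C : ℝ}

theorem sepNum_le_of_card_le (h : ∀ A, IsOrbitSeparated d φ n ε A → (A.card : ℝ) ≤ C) :
    (sepNum d φ n ε : ℝ) ≤ C := by
  have hC : 0 ≤ C := by simpa using h ∅ (by simp [IsOrbitSeparated])
  refine le_trans ?_ (Nat.floor_le hC)
  exact_mod_cast csSup_le' (by rintro _ ⟨A, hA, rfl⟩; exact Nat.le_floor (h A hA))

theorem card_le_sepNum (h : ∀ A, IsOrbitSeparated d φ n ε A → (A.card : ℝ) ≤ C) {A : Finset X}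
    (hA : IsOrbitSeparated d φ n ε A) : A.card ≤ sepNum d φ n ε :=
  le_csSup ⟨⌊C⌋₊, by rintro _ ⟨B, hB, rfl⟩; exact Nat.le_floor (h B hB)⟩ ⟨A, hA, rfl⟩

theorem eventually_log_sepNum_div_le [Nonempty X] {B : ℝ} (hC : 0 < C) (hB : 0 < B)
    (h : ∀ n A, IsOrbitSeparated d φ n ε A → (A.card : ℝ) ≤ C * B ^ n) :
    ∀ᶠ n : ℕ in atTop, Real.log (sepNum d φ n ε) / n ≤ Real.log C / n + Real.log B := by
  obtain ⟨x⟩ := ‹Nonempty X›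
  refine eventually_atTop.2 ⟨1, fun n hn => ?_⟩
  have hpos : (0 : ℝ) < sepNum d φ n ε := by
    have := card_le_sepNum (h n) (A := {x}) (by simp [IsOrbitSeparated])
    exact_mod_cast Finset.card_singleton x ▸ this
  have hn' : (0 : ℝ) < n := by exact_mod_cast hn
  have hlog : Real.log (sepNum d φ n ε) ≤ Real.log C + n * Real.log B := by
    rw [← Real.log_pow, ← Real.log_mul hC.ne' (by positivity)]
    exact Real.log_le_log hpos (sepNum_le_of_card_le (h n))
  calc Real.log (sepNum d φ n ε) / n ≤ (Real.log C + n * Real.log B) / n := by gcongr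
    _ = Real.log C / n + Real.log B := by field_simp

theorem tendsto_div_natCast_add (c b : ℝ) : Tendsto (fun n : ℕ => c / n + b) atTop (𝓝 b) := by
  simpa using (tendsto_const_div_atTop_nhds_zero_nat c).add_const b

theorem sepExp_le_log [Nonempty X] {B : ℝ} (hC : 0 < C) (hB : 0 < B)
    (h : ∀ n A, IsOrbitSeparated d φ n ε A → (A.card : ℝ) ≤ C * B ^ n) :
    sepExp d φ ε ≤ Real.log B := by
  have hlim := tendsto_div_natCast_add (Real.log C) (Real.log B)
  calc sepExp d φ ε ≤ limsup (fun n : ℕ => Real.log C / n + Real.log B) atTop :=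
        limsup_le_limsup (eventually_log_sepNum_div_le hC hB h)
          (isCoboundedUnder_le_of_le atTop fun n => div_nonneg (Real.log_natCast_nonneg _)
            n.cast_nonneg)
          hlim.isBoundedUnder_le
    _ = Real.log B := hlim.limsup_eq

theorem log_le_sepExp [Nonempty X] {B : ℝ} {M : ℕ} (hC : 0 < C) (hB : 0 < B) (hM : 0 < M)
    (h : ∀ n A, IsOrbitSeparated d φ n ε A → (A.card : ℝ) ≤ C * B ^ n)
    (hA : ∀ n, ∃ A, IsOrbitSeparated d φ n ε A ∧ A.card = M ^ n) :
    Real.log M ≤ sepExp d φ ε := by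
  refine le_limsup_of_frequently_le (eventually_atTop.2 ⟨1, fun n hn => ?_⟩).frequently
    ((tendsto_div_natCast_add _ _).isBoundedUnder_le.mono_le
      (eventually_log_sepNum_div_le hC hB h))
  obtain ⟨A, hA, hcard⟩ := hA n
  have hn : (0 : ℝ) < n := by exact_mod_cast hn
  have hle : ((M ^ n : ℕ) : ℝ) ≤ sepNum d φ n ε := by
    exact_mod_cast hcard ▸ card_le_sepNum (h n) hA
  rw [le_div_iff₀ hn, mul_comm, ← Real.log_pow]
  exact Real.log_le_log (by positivity) (by exact_mod_cast hle)

end SepExp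

theorem tendsto_div_abs_log_of_abs_sub_le {s : ℝ → ℝ} {a C : ℝ}
    (h : ∀ᶠ ε in 𝓝[>] 0, |s ε - (a * |Real.log ε|)| ≤ C) :
    Tendsto (fun ε => s ε / |Real.log ε|) (𝓝[>] 0) (𝓝 a) := by
  have hlog : Tendsto (fun ε => |Real.log ε|) (𝓝[>] 0) atTop :=
    tendsto_abs_atBot_atTop.comp Real.tendsto_log_nhdsGT_zero
  rw [tendsto_iff_norm_sub_tendsto_zero]
  refine squeeze_zero' (Eventually.of_forall fun _ => norm_nonneg _) ?_
    ((tendsto_const_nhds (x := C)).div_atTop hlog)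
  filter_upwards [h, hlog.eventually_gt_atTop 0] with ε hε hpos
  have hdiv : s ε / |Real.log ε| - a = (s ε - a * |Real.log ε|) / |Real.log ε| := by
    field_simp
  rw [Real.norm_eq_abs, hdiv, abs_div, abs_of_pos hpos]
  gcongr

theorem continuous_of_dist_le_rpow {X Y : Type*} [PseudoMetricSpace X] [PseudoMetricSpace Y]
    {f : X → Y} {K α : ℝ} (hα : 0 < α) (h : ∀ x y, dist (f x) (f y) ≤ K * dist x y ^ α) :
    Continuous f := by
  refine continuous_iff_continuousAt.2 fun x => tendsto_iff_dist_tendsto_zero.2 ?_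
  refine squeeze_zero (fun _ => dist_nonneg) (fun y => h y x) ?_
  have : Continuous fun y => K * dist y x ^ α :=
    continuous_const.mul ((continuous_id.dist continuous_const).rpow_const fun _ => Or.inr hα.le)
  simpa [Real.zero_rpow hα.ne'] using this.tendsto x

theorem min_le_rpow_mul_rpow {t w a : ℝ} (ht : 0 ≤ t) (hw : 0 ≤ w) (ha0 : 0 ≤ a) (ha1 : a ≤ 1) :
    min t w ≤ w ^ a * t ^ (1 - a) := by
  have split : ∀ u : ℝ, 0 ≤ u → u = u ^ a * u ^ (1 - a) := fun u hu => by
    rw [← Real.rpow_add' hu (by norm_num), add_sub_cancel, Real.rpow_one]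
  rcases le_total t w with htw | hwt
  · calc min t w = t ^ a * t ^ (1 - a) := by rw [min_eq_left htw, ← split t ht]
      _ ≤ w ^ a * t ^ (1 - a) := by gcongr
  · calc min t w = w ^ a * w ^ (1 - a) := by rw [min_eq_right hwt, ← split w hw]
      _ ≤ w ^ a * t ^ (1 - a) := by gcongr

/-- The stretch between the fixed points contributes `|g p - g q| = p - q ≤ (p - q) ^ α`. -/
theorem abs_sub_le_of_fixed {g : ℝ → ℝ} {C α x y p q : ℝ} (hC : 0 ≤ C) (hα0 : 0 ≤ α)
    (hα1 : α ≤ 1) (hyq : y ≤ q) (hqp : q ≤ p) (hpx : p ≤ x) (hpq : p - q ≤ 1) (hp : g p = p)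
    (hq : g q = q) (hxp : |g x - g p| ≤ C * (x - p) ^ α) (hqy : |g q - g y| ≤ C * (q - y) ^ α) :
    |g x - g y| ≤ (2 * C + 1) * (x - y) ^ α := by
  have h1 : (x - p) ^ α ≤ (x - y) ^ α := by gcongr; linarith
  have h2 : (q - y) ^ α ≤ (x - y) ^ α := by gcongr; linarith
  have h3 : p - q ≤ (x - y) ^ α :=
    (Real.self_le_rpow_of_le_one (by linarith) hpq hα1).trans (by gcongr)
  have hpq' : |g p - g q| = p - q := by rw [hp, hq, abs_of_nonneg (by linarith)]
  linarith [abs_sub_le (g x) (g p) (g y), abs_sub_le (g p) (g q) (g y),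
    mul_le_mul_of_nonneg_left h1 hC, mul_le_mul_of_nonneg_left h2 hC]

/-- The distance from `t` to the nearest even integer. -/
def triangleWave (t : ℝ) : ℝ := 2 * |t / 2 - round (t / 2)|

theorem triangleWave_nonneg (t : ℝ) : 0 ≤ triangleWave t := by
  unfold triangleWave; positivity

theorem triangleWave_le_one (t : ℝ) : triangleWave t ≤ 1 := by
  unfold triangleWave; linarith [abs_sub_round (t / 2)]

theorem triangleWave_le_add (s t : ℝ) : triangleWave s ≤ |s - t| + triangleWave t := by
  unfold triangleWave
  have h := abs_sub_le (s / 2) (t / 2) (round (t / 2))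
  rw [← sub_div, abs_div, abs_two] at h
  linarith [round_le (s / 2) (round (t / 2))]

theorem abs_triangleWave_sub_le (s t : ℝ) : |triangleWave s - triangleWave t| ≤ |s - t| :=
  abs_sub_le_iff.2 ⟨by linarith [triangleWave_le_add s t],
    by linarith [triangleWave_le_add t s, abs_sub_comm s t]⟩

theorem triangleWave_two_mul_add (p : ℤ) {t : ℝ} (ht0 : 0 ≤ t) (ht1 : t ≤ 1) :
    triangleWave (2 * p + t) = t := by
  have hround : |t / 2 - round (t / 2)| = t / 2 := by
    have ht : 0 ≤ t / 2 := by linarith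
    refine le_antisymm (by simpa [abs_of_nonneg ht] using round_le (t / 2) 0) ?_
    rcases le_or_gt (round (t / 2)) 0 with h | h
    · have : (round (t / 2) : ℝ) ≤ 0 := by exact_mod_cast h
      rw [abs_of_nonneg (by linarith)]; linarith
    · have : (1 : ℝ) ≤ round (t / 2) := by exact_mod_cast h
      rw [abs_of_nonpos (by linarith)]; linarith
  rw [triangleWave, show (2 * p + t) / 2 = t / 2 + p by ring, round_add_intCast]
  push_cast
  rw [add_sub_add_right_eq_sub, hround]
  ring

/-- The zigzag on `[l, 2 l]` has about `lapScale a l` laps, so that `laps * lapWidth ^ a` stays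
between two constants: this one balance yields both the `(1 - a)`-Hölder bound and mean
dimension `a`. -/
def lapScale (a l : ℝ) : ℝ := (4 * l) ^ (-(a / (1 - a)))

/-- Odd, so that the zigzag fixes both ends of `[l, 2 l]`. -/
def laps (a l : ℝ) : ℕ := 2 * ⌈lapScale a l⌉₊ - 1

def lapWidth (a l : ℝ) : ℝ := l / laps a l

/-- The zigzag on `[l, 2 l]`: it runs `laps a l` times monotonically between `l` and `2 l`. -/
def zigzag (a l x : ℝ) : ℝ := l + l * triangleWave ((x - l) / lapWidth a l)

section Laps

variable {a l : ℝ}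

theorem lapScale_pos (hl : 0 < l) : 0 < lapScale a l := by
  unfold lapScale; positivity

theorem one_le_lapScale (ha0 : 0 ≤ a) (ha1 : a < 1) (hl : 0 < l) (hl4 : l ≤ 1 / 4) :
    1 ≤ lapScale a l :=
  Real.one_le_rpow_of_pos_of_le_one_of_nonpos (by positivity) (by linarith)
    (neg_nonpos.2 (div_nonneg ha0 (sub_nonneg.2 ha1.le)))

theorem lapScale_two_mul (hl : 0 < l) :
    lapScale a (2 * l) = lapScale a l / 2 ^ (a / (1 - a)) := by
  rw [lapScale, lapScale, show 4 * (2 * l) = 2 * (4 * l) by ring,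
    Real.mul_rpow (by norm_num) (by positivity), Real.rpow_neg (by norm_num), inv_mul_eq_div]

theorem lapScale_rpow_mul_rpow (ha1 : a < 1) (hl : 0 < l) :
    lapScale a l ^ (1 - a) * l ^ a = 4 ^ (-a) := by
  rw [lapScale, ← Real.rpow_mul (by positivity), show -(a / (1 - a)) * (1 - a) = -a by
    field_simp [(sub_pos.2 ha1).ne'], Real.mul_rpow (by norm_num) hl.le, mul_assoc,
    ← Real.rpow_add hl, neg_add_cancel, Real.rpow_zero, mul_one]

theorem one_le_ceil_lapScale (hl : 0 < l) : 1 ≤ ⌈lapScale a l⌉₊ :=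
  Nat.one_le_ceil_iff.2 (lapScale_pos hl)

theorem laps_cast (hl : 0 < l) : (laps a l : ℝ) = 2 * ⌈lapScale a l⌉₊ - 1 := by
  have := one_le_ceil_lapScale (a := a) hl
  rw [laps, Nat.cast_sub (by omega)]
  push_cast; ring

theorem one_le_laps (hl : 0 < l) : (1 : ℝ) ≤ laps a l := by
  have : (1 : ℝ) ≤ ⌈lapScale a l⌉₊ := by exact_mod_cast one_le_ceil_lapScale hl
  rw [laps_cast hl]; linarith

theorem lapScale_le_laps (hl : 0 < l) : lapScale a l ≤ laps a l := by
  have : (1 : ℝ) ≤ ⌈lapScale a l⌉₊ := by exact_mod_cast one_le_ceil_lapScale hl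
  rw [laps_cast hl]; linarith [Nat.le_ceil (lapScale a l)]

theorem laps_le (hl : 0 < l) : (laps a l : ℝ) ≤ 2 * lapScale a l + 1 := by
  rw [laps_cast hl]; linarith [Nat.ceil_lt_add_one (lapScale_pos (a := a) hl).le]

theorem triangleWave_laps (hl : 0 < l) : triangleWave (laps a l) = 1 := by
  have h := one_le_ceil_lapScale (a := a) hl
  have : (laps a l : ℝ) = 2 * ((⌈lapScale a l⌉₊ - 1 : ℕ) : ℤ) + 1 := by
    rw [laps_cast hl]; push_cast [Nat.cast_sub h]; ring
  rw [this, triangleWave_two_mul_add _ zero_le_one le_rfl]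

theorem lapWidth_pos (hl : 0 < l) : 0 < lapWidth a l :=
  div_pos hl (by linarith [one_le_laps (a := a) hl])

theorem lapWidth_le_self (hl : 0 < l) : lapWidth a l ≤ l :=
  div_le_self hl.le (one_le_laps hl)

theorem laps_mul_lapWidth (hl : 0 < l) : laps a l * lapWidth a l = l := by
  rw [lapWidth, mul_div_cancel₀ _ (by linarith [one_le_laps (a := a) hl])]

theorem laps_mul_lapWidth_rpow (hl : 0 < l) :
    laps a l * lapWidth a l ^ a = (laps a l : ℝ) ^ (1 - a) * l ^ a := by
  have hN : (0 : ℝ) < laps a l := by linarith [one_le_laps (a := a) hl]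
  rw [lapWidth, Real.div_rpow hl.le hN.le, Real.rpow_sub hN, Real.rpow_one]
  field_simp

end Laps

section LapEstimates

variable {a l : ℝ}

theorem laps_mul_lapWidth_rpow_le (ha0 : 0 ≤ a) (ha1 : a < 1) (hl : 0 < l) (hl1 : l ≤ 1) :
    laps a l * lapWidth a l ^ a ≤ 3 := by
  set x := lapScale a l
  have hx : 0 < x := lapScale_pos hl
  have hN := laps_le (a := a) hl
  have hN0 : (0 : ℝ) ≤ laps a l := by linarith [one_le_laps (a := a) hl]
  have h3 : (3 : ℝ) ^ (1 - a) ≤ 3 := Real.rpow_le_self_of_one_le (by norm_num) (by linarith)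
  rw [laps_mul_lapWidth_rpow hl]
  rcases le_total x 1 with hx1 | hx1
  · calc (laps a l : ℝ) ^ (1 - a) * l ^ a ≤ 3 ^ (1 - a) * 1 := by
          gcongr
          · linarith
          · exact Real.rpow_le_one hl.le hl1 ha0
      _ ≤ 3 := by linarith
  · calc (laps a l : ℝ) ^ (1 - a) * l ^ a ≤ (3 * x) ^ (1 - a) * l ^ a := by
          gcongr
          linarith
      _ = 3 ^ (1 - a) * 4 ^ (-a) := by
          rw [Real.mul_rpow (by norm_num) hx.le, mul_assoc, lapScale_rpow_mul_rpow ha1 hl]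
      _ ≤ 3 * 1 := by
          gcongr
          exact Real.rpow_le_one_of_one_le_of_nonpos (by norm_num) (by linarith)
      _ = 3 := mul_one 3

theorem rpow_neg_le_laps_mul_lapWidth_rpow (ha1 : a < 1) (hl : 0 < l) :
    (4 : ℝ) ^ (-a) ≤ laps a l * lapWidth a l ^ a := by
  rw [laps_mul_lapWidth_rpow hl, ← lapScale_rpow_mul_rpow ha1 hl]
  exact mul_le_mul_of_nonneg_right (Real.rpow_le_rpow (lapScale_pos hl).le (lapScale_le_laps hl)
    (by linarith)) (by positivity)

theorem lapWidth_two_mul_le (ha0 : 0 ≤ a) (ha1 : a < 1) (hl : 0 < l) (hl4 : l ≤ 1 / 4) :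
    lapWidth a (2 * l) ≤ 6 * 2 ^ (a / (1 - a)) * lapWidth a l := by
  set x := lapScale a l
  set y := (2 : ℝ) ^ (a / (1 - a))
  have hx1 : 1 ≤ x := one_le_lapScale ha0 ha1 hl hl4
  have hy : 0 < y := by positivity
  have hN2 : x / y ≤ laps a (2 * l) :=
    lapScale_two_mul (a := a) hl ▸ lapScale_le_laps (by positivity)
  have hN1 : (laps a l : ℝ) ≤ 3 * x := by linarith [laps_le (a := a) hl]
  calc lapWidth a (2 * l) ≤ 2 * l / (x / y) := by
        unfold lapWidth; gcongr
    _ = 6 * y * (l / (3 * x)) := by field_simp; ring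
    _ ≤ 6 * y * lapWidth a l := by
        unfold lapWidth; gcongr
        linarith [one_le_laps (a := a) hl]

end LapEstimates

section Zigzag

variable {a l : ℝ}

theorem zigzag_mem_Icc (hl : 0 < l) (x : ℝ) : zigzag a l x ∈ Icc l (2 * l) := by
  have h0 := triangleWave_nonneg ((x - l) / lapWidth a l)
  have h1 := triangleWave_le_one ((x - l) / lapWidth a l)
  constructor <;> unfold zigzag <;> nlinarith

theorem zigzag_self : zigzag a l l = l := by
  simp [zigzag, triangleWave]

theorem zigzag_two_mul (hl : 0 < l) : zigzag a l (2 * l) = 2 * l := by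
  rw [zigzag, show 2 * l - l = l by ring, lapWidth, div_div_cancel₀ hl.ne', triangleWave_laps hl]
  ring

theorem abs_zigzag_sub_le (hl : 0 < l) (x y : ℝ) :
    |zigzag a l x - zigzag a l y| ≤ laps a l * min |x - y| (lapWidth a l) := by
  have hw := lapWidth_pos (a := a) hl
  set u := (x - l) / lapWidth a l
  set v := (y - l) / lapWidth a l
  have huv : |u - v| = |x - y| / lapWidth a l := by
    rw [← sub_div, sub_sub_sub_cancel_right, abs_div, abs_of_pos hw]
  have hwave : |triangleWave u - triangleWave v| ≤ min (|x - y| / lapWidth a l) 1 :=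
    le_min (huv ▸ abs_triangleWave_sub_le u v) (abs_sub_le_iff.2
      ⟨by linarith [triangleWave_le_one u, triangleWave_nonneg v],
        by linarith [triangleWave_le_one v, triangleWave_nonneg u]⟩)
  calc |zigzag a l x - zigzag a l y| = l * |triangleWave u - triangleWave v| := by
        rw [zigzag, zigzag, add_sub_add_left_eq_sub, ← mul_sub, abs_mul, abs_of_pos hl]
    _ ≤ l * min (|x - y| / lapWidth a l) 1 := by gcongr
    _ = laps a l * (lapWidth a l * min (|x - y| / lapWidth a l) 1) := by
        rw [← mul_assoc, laps_mul_lapWidth hl]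
    _ = laps a l * min |x - y| (lapWidth a l) := by
        rw [mul_min_of_nonneg _ _ hw.le, mul_div_cancel₀ _ hw.ne', mul_one]

theorem abs_zigzag_sub_le_rpow (ha0 : 0 ≤ a) (ha1 : a < 1) (hl : 0 < l) (hl1 : l ≤ 1)
    (x y : ℝ) : |zigzag a l x - zigzag a l y| ≤ 3 * |x - y| ^ (1 - a) := by
  calc |zigzag a l x - zigzag a l y| ≤ laps a l * min |x - y| (lapWidth a l) :=
        abs_zigzag_sub_le hl x y
    _ ≤ laps a l * (lapWidth a l ^ a * |x - y| ^ (1 - a)) := by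
        gcongr
        exact min_le_rpow_mul_rpow (abs_nonneg _) (lapWidth_pos hl).le ha0 ha1.le
    _ ≤ 3 * |x - y| ^ (1 - a) := by
        rw [← mul_assoc]; gcongr; exact laps_mul_lapWidth_rpow_le ha0 ha1 hl hl1

/-- The `c`-th increasing inverse branch of `zigzag a l`. -/
def zigzagBranch (a l : ℝ) (c : ℕ) (y : ℝ) : ℝ := l + 2 * c * lapWidth a l + (y - l) / laps a l

theorem zigzagBranch_mem (hl : 0 < l) (c : ℕ) {y : ℝ} (hy : y ∈ Icc l (2 * l)) :
    zigzagBranch a l c y ∈ Icc (l + 2 * c * lapWidth a l) (l + (2 * c + 1) * lapWidth a l) := by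
  have hN : (0 : ℝ) < laps a l := by linarith [one_le_laps (a := a) hl]
  have : (y - l) / laps a l ≤ lapWidth a l := by
    unfold lapWidth; gcongr; linarith [hy.2]
  constructor <;> unfold zigzagBranch
  · linarith [div_nonneg (sub_nonneg.2 hy.1) hN.le]
  · linarith

theorem zigzagBranch_mapsTo (hl : 0 < l) {c : ℕ} (hc : 2 * c + 1 ≤ (laps a l : ℝ)) :
    MapsTo (zigzagBranch a l c) (Icc l (2 * l)) (Icc l (2 * l)) := fun y hy => by
  have hw := lapWidth_pos (a := a) hl
  have h := zigzagBranch_mem (a := a) hl c hy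
  have hc' := mul_le_mul_of_nonneg_right hc hw.le
  rw [laps_mul_lapWidth hl] at hc'
  exact ⟨by nlinarith [h.1], by linarith [h.2]⟩

theorem le_zigzagBranch_sub_zigzagBranch (hl : 0 < l) {c c' m : ℕ} (hcc' : c + m ≤ c') {y z : ℝ}
    (hy : y ∈ Icc l (2 * l)) (hz : z ∈ Icc l (2 * l)) :
    (2 * m - 1) * lapWidth a l ≤ zigzagBranch a l c' z - zigzagBranch a l c y := by
  have hw := lapWidth_pos (a := a) hl
  have hcc'' : (c : ℝ) + m ≤ c' := by exact_mod_cast hcc'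
  nlinarith [(zigzagBranch_mem (a := a) hl c hy).2, (zigzagBranch_mem (a := a) hl c' hz).1]

theorem zigzag_zigzagBranch (hl : 0 < l) (c : ℕ) {y : ℝ} (hy : y ∈ Icc l (2 * l)) :
    zigzag a l (zigzagBranch a l c y) = y := by
  have hN : (0 : ℝ) < laps a l := by linarith [one_le_laps (a := a) hl]
  have harg : (zigzagBranch a l c y - l) / lapWidth a l = 2 * ((c : ℤ) : ℝ) + (y - l) / l := by
    rw [zigzagBranch, lapWidth]; push_cast; field_simp; ring
  rw [zigzag, harg, triangleWave_two_mul_add _ (div_nonneg (by linarith [hy.1]) hl.le)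
    ((div_le_one hl).2 (by linarith [hy.2]))]
  field_simp; ring

end Zigzag

/-- On each dyadic interval `[2 ^ j, 2 ^ (j + 1)]` the map is the zigzag `zigzag a (2 ^ j)`. -/
def zigzagMap (a x : ℝ) : ℝ := if x ≤ 0 then 0 else zigzag a (2 ^ Int.log 2 x) x

section ZigzagMap

variable {a x y : ℝ} {j : ℤ}

theorem two_zpow_add_one (j : ℤ) : (2 : ℝ) ^ (j + 1) = 2 * 2 ^ j := by
  rw [zpow_add_one₀ two_ne_zero, mul_comm]

theorem two_zpow_le_two_zpow_add_one (j : ℤ) : (2 : ℝ) ^ j ≤ 2 ^ (j + 1) :=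
  zpow_le_zpow_right₀ one_le_two (Int.le_add_one le_rfl)

theorem mem_Ico_int_log (hx : 0 < x) : x ∈ Ico ((2 : ℝ) ^ Int.log 2 x) (2 ^ (Int.log 2 x + 1)) := by
  have h1 := Int.zpow_log_le_self (b := 2) one_lt_two hx
  have h2 := Int.lt_zpow_succ_log_self (b := 2) one_lt_two x
  exact ⟨by exact_mod_cast h1, by exact_mod_cast h2⟩

theorem int_log_eq_of_mem_Ico (hx : x ∈ Ico ((2 : ℝ) ^ j) (2 ^ (j + 1))) : Int.log 2 x = j := by
  have hx0 : 0 < x := (zpow_pos two_pos j).trans_le hx.1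
  have h1 := (Int.zpow_le_iff_le_log (b := 2) one_lt_two hx0).1 (by exact_mod_cast hx.1)
  have h2 := (Int.lt_zpow_iff_log_lt (b := 2) one_lt_two hx0).1 (by exact_mod_cast hx.2)
  omega

theorem int_log_nonpos (hx1 : x ≤ 1) : Int.log 2 x ≤ 0 := by
  rcases le_or_gt x 0 with hx0 | hx0
  · rw [Int.log_of_right_le_zero _ hx0]
  · simpa using Int.log_mono_right (b := 2) hx0 hx1

theorem exists_mem_dyadic_of_zpow_lt {j₀ : ℤ} (hx : (2 : ℝ) ^ j₀ < x) (hx1 : x ≤ 1) :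
    ∃ j ∈ Finset.Icc j₀ 0, x ∈ Icc ((2 : ℝ) ^ j) (2 ^ (j + 1)) := by
  have hx0 : 0 < x := (zpow_pos two_pos j₀).trans hx
  refine ⟨Int.log 2 x, Finset.mem_Icc.2 ⟨?_, int_log_nonpos hx1⟩,
    Ico_subset_Icc_self (mem_Ico_int_log hx0)⟩
  exact (Int.zpow_le_iff_le_log (b := 2) one_lt_two hx0).1 (by exact_mod_cast hx.le)

theorem zigzagMap_zero : zigzagMap a 0 = 0 := by simp [zigzagMap]

theorem zigzagMap_of_mem_Icc (hx : x ∈ Icc ((2 : ℝ) ^ j) (2 ^ (j + 1))) :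
    zigzagMap a x = zigzag a (2 ^ j) x := by
  have hx0 : 0 < x := (zpow_pos two_pos j).trans_le hx.1
  rcases hx.2.lt_or_eq with hlt | rfl
  · rw [zigzagMap, if_neg hx0.not_ge, int_log_eq_of_mem_Ico ⟨hx.1, hlt⟩]
  · have hlog : Int.log 2 ((2 : ℝ) ^ (j + 1)) = j + 1 := by
      exact_mod_cast Int.log_zpow (R := ℝ) one_lt_two (j + 1)
    rw [zigzagMap, if_neg hx0.not_ge, hlog, zigzag_self, two_zpow_add_one,
      zigzag_two_mul (zpow_pos two_pos j)]

theorem zigzagMap_zpow (j : ℤ) : zigzagMap a (2 ^ j) = 2 ^ j := by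
  rw [zigzagMap_of_mem_Icc (left_mem_Icc.2 (two_zpow_le_two_zpow_add_one j)), zigzag_self]

theorem mapsTo_zigzagMap_dyadic (a : ℝ) (j : ℤ) :
    MapsTo (zigzagMap a) (Icc (2 ^ j) (2 ^ (j + 1))) (Icc (2 ^ j) (2 ^ (j + 1))) := by
  intro x hx
  rw [zigzagMap_of_mem_Icc hx, two_zpow_add_one]
  exact zigzag_mem_Icc (zpow_pos two_pos j) x

theorem mapsTo_zigzagMap_Icc_zero (a : ℝ) (j : ℤ) :
    MapsTo (zigzagMap a) (Icc 0 (2 ^ j)) (Icc 0 (2 ^ j)) := by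
  intro x hx
  rcases hx.1.eq_or_lt with rfl | hx0
  · rw [zigzagMap_zero]; exact hx
  have hmem := mem_Ico_int_log hx0
  have hfx := mapsTo_zigzagMap_dyadic a _ (Ico_subset_Icc_self hmem)
  rcases lt_or_ge (Int.log 2 x) j with hlt | hge
  · have : (2 : ℝ) ^ (Int.log 2 x + 1) ≤ 2 ^ j := zpow_le_zpow_right₀ one_le_two (by omega)
    exact ⟨(zpow_pos two_pos _).le.trans hfx.1, hfx.2.trans this⟩
  · have hxj : x = 2 ^ j :=
      le_antisymm hx.2 ((zpow_le_zpow_right₀ one_le_two hge).trans hmem.1)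
    rw [hxj, zigzagMap_zpow]
    exact ⟨(zpow_pos two_pos j).le, le_rfl⟩

theorem abs_zigzagMap_sub_le_of_mem (ha0 : 0 ≤ a) (ha1 : a < 1) (hj : j ≤ 0)
    (hx : x ∈ Icc ((2 : ℝ) ^ j) (2 ^ (j + 1))) (hy : y ∈ Icc ((2 : ℝ) ^ j) (2 ^ (j + 1))) :
    |zigzagMap a x - zigzagMap a y| ≤ 3 * |x - y| ^ (1 - a) := by
  rw [zigzagMap_of_mem_Icc hx, zigzagMap_of_mem_Icc hy]
  exact abs_zigzag_sub_le_rpow ha0 ha1 (zpow_pos two_pos j) (zpow_le_one_of_nonpos₀ one_le_two hj)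
    x y

theorem abs_zigzagMap_sub_zpow_le (ha0 : 0 ≤ a) (ha1 : a < 1) (hj : j ≤ 0)
    (hx : x ∈ Icc ((2 : ℝ) ^ j) (2 ^ (j + 1))) :
    |zigzagMap a x - zigzagMap a (2 ^ j)| ≤ 3 * (x - 2 ^ j) ^ (1 - a) := by
  have h := abs_zigzagMap_sub_le_of_mem ha0 ha1 hj hx
    (left_mem_Icc.2 (two_zpow_le_two_zpow_add_one j))
  rwa [abs_of_nonneg (sub_nonneg.2 hx.1)] at h

theorem abs_zigzagMap_zpow_add_one_sub_le (ha0 : 0 ≤ a) (ha1 : a < 1) (hj : j ≤ 0)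
    (hy : y ∈ Icc ((2 : ℝ) ^ j) (2 ^ (j + 1))) :
    |zigzagMap a (2 ^ (j + 1)) - zigzagMap a y| ≤ 3 * (2 ^ (j + 1) - y) ^ (1 - a) := by
  have h := abs_zigzagMap_sub_le_of_mem ha0 ha1 hj
    (right_mem_Icc.2 (two_zpow_le_two_zpow_add_one j)) hy
  rwa [abs_of_nonneg (sub_nonneg.2 hy.2)] at h

theorem abs_zigzagMap_sub_le_of_le (ha0 : 0 ≤ a) (ha1 : a < 1) (hy : 0 ≤ y) (hyx : y ≤ x)
    (hx1 : x ≤ 1) : |zigzagMap a x - zigzagMap a y| ≤ 7 * (x - y) ^ (1 - a) := by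
  have hα0 : 0 ≤ 1 - a := by linarith
  have hα1 : 1 - a ≤ 1 := by linarith
  have h7 : (2 * 3 + 1 : ℝ) = 7 := by norm_num
  rcases hyx.eq_or_lt with rfl | hyx'
  · rw [sub_self, sub_self, abs_zero]; positivity
  have hx0 : 0 < x := hy.trans_lt hyx'
  set i := Int.log 2 x
  have hxi := Ico_subset_Icc_self (mem_Ico_int_log hx0)
  have hi : i ≤ 0 := int_log_nonpos hx1
  have hxp := abs_zigzagMap_sub_zpow_le ha0 ha1 hi hxi
  rcases hy.eq_or_lt with rfl | hy0
  · rw [← h7]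
    refine abs_sub_le_of_fixed (by norm_num) hα0 hα1 le_rfl (zpow_pos two_pos i).le hxi.1
      (by linarith [hxi.1]) (zigzagMap_zpow i) zigzagMap_zero hxp ?_
    rw [sub_self, sub_self, abs_zero]; positivity
  set i' := Int.log 2 y
  have hyi := Ico_subset_Icc_self (mem_Ico_int_log hy0)
  rcases (Int.log_mono_right (b := 2) hy0 hyx).eq_or_lt with heq | hlt
  · rw [← heq] at hxi
    calc |zigzagMap a x - zigzagMap a y| ≤ 3 * |x - y| ^ (1 - a) :=
          abs_zigzagMap_sub_le_of_mem ha0 ha1 (heq ▸ hi) hxi hyi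
      _ ≤ 7 * (x - y) ^ (1 - a) := by
          rw [abs_of_nonneg (sub_nonneg.2 hyx)]; gcongr; norm_num
  · rw [← h7]
    exact abs_sub_le_of_fixed (by norm_num) hα0 hα1 hyi.2
      (zpow_le_zpow_right₀ one_le_two (by omega)) hxi.1
      (by linarith [hxi.1, zpow_pos (two_pos (α := ℝ)) (i' + 1)]) (zigzagMap_zpow i)
      (zigzagMap_zpow (i' + 1)) hxp (abs_zigzagMap_zpow_add_one_sub_le ha0 ha1 (by omega) hyi)

theorem abs_zigzagMap_sub_le (ha0 : 0 ≤ a) (ha1 : a < 1) (hx : x ∈ Icc (0 : ℝ) 1)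
    (hy : y ∈ Icc (0 : ℝ) 1) : |zigzagMap a x - zigzagMap a y| ≤ 7 * |x - y| ^ (1 - a) := by
  rcases le_total y x with hyx | hxy
  · rw [abs_of_nonneg (sub_nonneg.2 hyx)]
    exact abs_zigzagMap_sub_le_of_le ha0 ha1 hy.1 hyx hx.2
  · rw [abs_sub_comm, abs_sub_comm x, abs_of_nonneg (sub_nonneg.2 hxy)]
    exact abs_zigzagMap_sub_le_of_le ha0 ha1 hx.1 hxy hy.2

end ZigzagMap

section UpperBound

variable {a ε : ℝ} {j : ℤ} {n : ℕ} {A : Finset ℝ}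

theorem one_le_rpow_neg (ha0 : 0 ≤ a) (hε : 0 < ε) (hε1 : ε ≤ 1) : 1 ≤ ε ^ (-a) :=
  Real.one_le_rpow_of_pos_of_le_one_of_nonpos hε hε1 (by linarith)

theorem laps_le_of_le_lapWidth {l : ℝ} (ha0 : 0 ≤ a) (ha1 : a < 1) (hl : 0 < l) (hl1 : l ≤ 1)
    (hε : 0 < ε) (hεw : ε ≤ lapWidth a l) : (laps a l : ℝ) ≤ 3 * ε ^ (-a) := by
  have h : (laps a l : ℝ) * ε ^ a ≤ 3 :=
    (mul_le_mul_of_nonneg_left (Real.rpow_le_rpow hε.le hεw ha0) (by positivity)).trans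
      (laps_mul_lapWidth_rpow_le ha0 ha1 hl hl1)
  rwa [Real.rpow_neg hε.le, ← div_eq_mul_inv, le_div_iff₀ (by positivity)]

theorem div_le_of_lapWidth_le {l : ℝ} (ha0 : 0 ≤ a) (ha1 : a < 1) (hl : 0 < l) (hl1 : l ≤ 1)
    (hε : 0 < ε) (hwε : lapWidth a l ≤ ε) : l / ε ≤ 3 * ε ^ (-a) := by
  have hw := lapWidth_pos (a := a) hl
  have hl' : l ≤ 3 * ε ^ (1 - a) :=
    calc l = laps a l * lapWidth a l ^ a * lapWidth a l ^ (1 - a) := by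
          rw [mul_assoc, ← Real.rpow_add hw, add_sub_cancel, Real.rpow_one, laps_mul_lapWidth hl]
      _ ≤ 3 * ε ^ (1 - a) := by
          gcongr
          exact laps_mul_lapWidth_rpow_le ha0 ha1 hl hl1
  rwa [div_le_iff₀ hε, mul_assoc, ← Real.rpow_add_one hε.ne', neg_add_eq_sub]

theorem zigzagMap_card_le_of_le_lapWidth (ha0 : 0 ≤ a) (ha1 : a < 1) (hε : 0 < ε)
    (hε1 : ε ≤ 1) (hj : j ≤ 0) (hεw : ε ≤ lapWidth a (2 ^ j))
    (hA : IsOrbitSeparated dist (zigzagMap a) n ε A)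
    (hAj : ∀ x ∈ A, x ∈ Icc ((2 : ℝ) ^ j) (2 ^ (j + 1))) :
    (A.card : ℝ) ≤ (1 / ε + 1) * (4 * ε ^ (-a)) ^ n := by
  have hl : (0 : ℝ) < 2 ^ j := zpow_pos two_pos j
  have hl1 : (2 : ℝ) ^ j ≤ 1 := zpow_le_one_of_nonpos₀ one_le_two hj
  have hB : 1 ≤ 4 * ε ^ (-a) := by linarith [one_le_rpow_neg ha0 hε hε1]
  have hN := laps_le_of_le_lapWidth ha0 ha1 hl hl1 hε hεw
  have hlip : ∀ x ∈ Icc ((2 : ℝ) ^ j) (2 ^ (j + 1)), ∀ y ∈ Icc ((2 : ℝ) ^ j) (2 ^ (j + 1)),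
      dist (zigzagMap a x) (zigzagMap a y) ≤ laps a (2 ^ j) * dist x y := fun x hx y hy => by
    rw [Real.dist_eq, Real.dist_eq, zigzagMap_of_mem_Icc hx, zigzagMap_of_mem_Icc hy]
    exact (abs_zigzag_sub_le hl x y).trans (by gcongr; exact min_le_left _ _)
  have hN1 := one_le_laps (a := a) hl
  have hcard := (hA.of_lipschitzOn hAj (mapsTo_zigzagMap_dyadic a j) hN1
    hlip).card_le_of_iterate_mem_Icc (div_pos hε (pow_pos (by linarith) _))
      (two_zpow_le_two_zpow_add_one j)
      fun x hx i hi => by rw [Nat.lt_one_iff.1 hi]; exact hAj x hx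
  rw [pow_one, two_zpow_add_one, two_mul, add_sub_cancel_right, div_div_eq_mul_div] at hcard
  calc (A.card : ℝ) ≤ 2 ^ j * (laps a (2 ^ j) : ℝ) ^ (n - 1) / ε + 1 := hcard
    _ ≤ 1 * (4 * ε ^ (-a)) ^ n / ε + (4 * ε ^ (-a)) ^ n := by
        gcongr
        · calc (laps a (2 ^ j) : ℝ) ^ (n - 1) ≤ (4 * ε ^ (-a)) ^ (n - 1) := by
                gcongr; linarith
            _ ≤ (4 * ε ^ (-a)) ^ n := pow_le_pow_right₀ hB (Nat.sub_le n 1)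
        · exact one_le_pow₀ hB
    _ = (1 / ε + 1) * (4 * ε ^ (-a)) ^ n := by ring

theorem zigzagMap_card_le_of_lapWidth_le (ha0 : 0 ≤ a) (ha1 : a < 1) (hε : 0 < ε)
    (hε1 : ε ≤ 1) (hj : j ≤ 0) (hwε : lapWidth a (2 ^ j) ≤ ε)
    (hA : IsOrbitSeparated dist (zigzagMap a) n ε A)
    (hAj : ∀ x ∈ A, x ∈ Icc ((2 : ℝ) ^ j) (2 ^ (j + 1))) :
    (A.card : ℝ) ≤ (4 * ε ^ (-a)) ^ n := by
  have hl : (0 : ℝ) < 2 ^ j := zpow_pos two_pos j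
  have hl1 : (2 : ℝ) ^ j ≤ 1 := zpow_le_one_of_nonpos₀ one_le_two hj
  have hcard := hA.card_le_of_iterate_mem_Icc hε (two_zpow_le_two_zpow_add_one j)
    fun x hx i _ => (mapsTo_zigzagMap_dyadic a j).iterate i (hAj x hx)
  rw [two_zpow_add_one, two_mul, add_sub_cancel_right] at hcard
  refine hcard.trans ?_
  gcongr
  linarith [div_le_of_lapWidth_le ha0 ha1 hl hl1 hε hwε, one_le_rpow_neg ha0 hε hε1]

theorem zigzagMap_card_le_one (hj : (2 : ℝ) ^ j ≤ ε)
    (hA : IsOrbitSeparated dist (zigzagMap a) n ε A) (hAj : ∀ x ∈ A, x ∈ Icc 0 ((2 : ℝ) ^ j)) :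
    A.card ≤ 1 := by
  simpa using hA.card_le_pow (S := Icc 0 (2 ^ j)) (c := fun _ => 0) (P := 1)
    (fun x hx i _ => (mapsTo_zigzagMap_Icc_zero a j).iterate i (hAj x hx)) (fun _ _ => one_pos)
    fun x hx y hy _ => by
      rw [Real.dist_eq, abs_sub_le_iff]; constructor <;> linarith [hx.1, hx.2, hy.1, hy.2]

theorem zigzagMap_card_le_of_mem_dyadic (ha0 : 0 ≤ a) (ha1 : a < 1) (hε : 0 < ε)
    (hε1 : ε ≤ 1) (hj : j ≤ 0) (hA : IsOrbitSeparated dist (zigzagMap a) n ε A)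
    (hAj : ∀ x ∈ A, x ∈ Icc ((2 : ℝ) ^ j) (2 ^ (j + 1))) :
    (A.card : ℝ) ≤ (1 / ε + 1) * (4 * ε ^ (-a)) ^ n := by
  rcases le_total ε (lapWidth a (2 ^ j)) with hεw | hwε
  · exact zigzagMap_card_le_of_le_lapWidth ha0 ha1 hε hε1 hj hεw hA hAj
  · refine (zigzagMap_card_le_of_lapWidth_le ha0 ha1 hε hε1 hj hwε hA hAj).trans ?_
    have : (0 : ℝ) ≤ (4 * ε ^ (-a)) ^ n := by positivity
    nlinarith [one_div_pos.2 hε]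

theorem zigzagMap_exists_card_le (ha0 : 0 ≤ a) (ha1 : a < 1) (hε : 0 < ε)
    (hε1 : ε ≤ 1) : ∃ C > 0, ∀ (n : ℕ) (A : Finset ℝ), (∀ x ∈ A, x ∈ Icc (0 : ℝ) 1) →
      IsOrbitSeparated dist (zigzagMap a) n ε A → (A.card : ℝ) ≤ C * (4 * ε ^ (-a)) ^ n := by
  classical
  set j₀ := Int.log 2 ε
  have hj₀ : (2 : ℝ) ^ j₀ ≤ ε := by exact_mod_cast Int.zpow_log_le_self (b := 2) one_lt_two hε
  refine ⟨((Finset.Icc j₀ 0).card + 1) * (1 / ε + 1), by positivity, fun n A hA01 hA => ?_⟩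
  set bound := (1 / ε + 1) * (4 * ε ^ (-a)) ^ n
  have hbound : 1 ≤ bound := one_le_mul_of_one_le_of_one_le
    (by linarith [one_div_pos.2 hε]) (one_le_pow₀ (by linarith [one_le_rpow_neg ha0 hε hε1]))
  set tail := A.filter (· ≤ (2 : ℝ) ^ j₀)
  set pieces := (Finset.Icc j₀ 0).biUnion fun j => A.filter (· ∈ Icc ((2 : ℝ) ^ j) (2 ^ (j + 1)))
  have hcover : A ⊆ tail ∪ pieces := by
    intro x hx
    rcases le_or_gt x (2 ^ j₀) with hxj | hxj
    · exact Finset.mem_union_left _ (Finset.mem_filter.2 ⟨hx, hxj⟩)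
    obtain ⟨j, hj, hxj⟩ := exists_mem_dyadic_of_zpow_lt hxj (hA01 x hx).2
    exact Finset.mem_union_right _ (Finset.mem_biUnion.2 ⟨j, hj, Finset.mem_filter.2 ⟨hx, hxj⟩⟩)
  have htail : tail.card ≤ 1 := zigzagMap_card_le_one hj₀ (hA.mono (Finset.filter_subset _ A))
    fun x hx => ⟨(hA01 x (Finset.mem_filter.1 hx).1).1, (Finset.mem_filter.1 hx).2⟩
  have hpieces : (pieces.card : ℝ) ≤ (Finset.Icc j₀ 0).card * bound := by
    calc (pieces.card : ℝ)
        ≤ ∑ j ∈ Finset.Icc j₀ 0, ((A.filter (· ∈ Icc ((2 : ℝ) ^ j) (2 ^ (j + 1)))).card : ℝ) := by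
          exact_mod_cast Finset.card_biUnion_le
      _ ≤ ∑ _j ∈ Finset.Icc j₀ 0, bound := by
          refine Finset.sum_le_sum fun j hj => zigzagMap_card_le_of_mem_dyadic ha0 ha1 hε hε1
            (Finset.mem_Icc.1 hj).2 (hA.mono (Finset.filter_subset _ A))
            fun x hx => (Finset.mem_filter.1 hx).2
      _ = (Finset.Icc j₀ 0).card * bound := by rw [Finset.sum_const, nsmul_eq_mul]
  calc (A.card : ℝ) ≤ tail.card + pieces.card := by
        exact_mod_cast (Finset.card_le_card hcover).trans (Finset.card_union_le _ _)
    _ ≤ ((Finset.Icc j₀ 0).card + 1) * bound := by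
        have : (tail.card : ℝ) ≤ 1 := by exact_mod_cast htail
        nlinarith
    _ = _ := by ring

end UpperBound

section LowerBound

variable {a ε : ℝ}

theorem exists_lapWidth_zpow_le_lt (hε : 0 < ε) (hεw : ε < lapWidth a (1 / 2)) :
    ∃ j : ℤ, j ≤ -2 ∧ lapWidth a (2 ^ j) ≤ ε ∧ ε < lapWidth a (2 ^ (j + 1)) := by
  have hlog : (2 : ℝ) ^ Int.log 2 ε ≤ ε := by
    exact_mod_cast Int.zpow_log_le_self (b := 2) one_lt_two hε
  obtain ⟨j, ⟨hj, hjε⟩, hmax⟩ := Int.exists_greatest_of_bdd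
    (P := fun j : ℤ => j ≤ -2 ∧ lapWidth a (2 ^ j) ≤ ε) ⟨-2, fun _ h => h.1⟩
    ⟨min (Int.log 2 ε) (-2), min_le_right _ _, (lapWidth_le_self (zpow_pos two_pos _)).trans
      ((zpow_le_zpow_right₀ one_le_two (min_le_left _ _)).trans hlog)⟩
  refine ⟨j, hj, hjε, lt_of_not_ge fun h => ?_⟩
  rcases lt_or_eq_of_le hj with hj' | rfl
  · have := hmax (j + 1) ⟨by omega, h⟩
    omega
  · norm_num at h
    linarith

theorem zigzagMap_exists_isOrbitSeparated_dyadic {j : ℤ} {m : ℕ} (hε : 0 ≤ ε)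
    (hgap : ε < (2 * m - 1) * lapWidth a (2 ^ j)) (n : ℕ) :
    ∃ A : Finset ℝ, (A : Set ℝ) ⊆ Icc (2 ^ j) (2 ^ (j + 1)) ∧
      IsOrbitSeparated dist (zigzagMap a) n ε A ∧
      A.card = ((laps a (2 ^ j) - 1) / (2 * m) + 1) ^ n := by
  set l : ℝ := 2 ^ j
  set M := (laps a l - 1) / (2 * m) + 1
  have hl : 0 < l := zpow_pos two_pos j
  have hJ : Icc l (2 ^ (j + 1)) = Icc l (2 * l) := by rw [two_zpow_add_one]
  -- every `m`-th lap gives a branch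
  have hmaps : ∀ s : Fin M, MapsTo (zigzagBranch a l (m * s)) (Icc l (2 * l)) (Icc l (2 * l)) :=
    fun s => zigzagBranch_mapsTo hl (by
      have hN1 : 1 ≤ laps a l := by exact_mod_cast one_le_laps (a := a) hl
      have hs : 2 * (m * s) ≤ laps a l - 1 := by
        rw [← mul_assoc]
        exact (Nat.mul_le_mul_left _ (Nat.lt_succ_iff.1 s.2)).trans (Nat.mul_div_le _ _)
      exact_mod_cast (by omega : 2 * (m * s) + 1 ≤ laps a l))
  have hsep : ∀ s t : Fin M, s < t → ∀ y ∈ Icc l (2 * l), ∀ z ∈ Icc l (2 * l),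
      ε < zigzagBranch a l (m * t) z - zigzagBranch a l (m * s) y := fun s t hst y hy z hz =>
    hgap.trans_le (le_zigzagBranch_sub_zigzagBranch hl (by nlinarith [Fin.lt_def.1 hst]) hy hz)
  rw [hJ]
  refine exists_isOrbitSeparated_of_inverse_branches hε hmaps (fun s y hy => ?_)
    ⟨le_rfl, by linarith⟩ (fun s t hst y hy z hz => ?_) n
  · rw [zigzagMap_of_mem_Icc (j := j) (hJ ▸ hmaps s hy)]
    exact zigzag_zigzagBranch hl _ hy
  · rw [Real.dist_eq]
    rcases lt_or_gt_of_ne hst with h | h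
    · rw [abs_sub_comm]; exact (hsep s t h y hy z hz).trans_le (le_abs_self _)
    · exact (hsep t s h z hz y hy).trans_le (le_abs_self _)

theorem zigzagMap_exists_isOrbitSeparated_card_eq_pow (ha0 : 0 ≤ a) (ha1 : a < 1) (hε : 0 < ε)
    (hεw : ε < lapWidth a (1 / 2)) : ∃ M : ℕ, 0 < M ∧
      ε ^ (-a) ≤ 8 * ⌈6 * (2 : ℝ) ^ (a / (1 - a))⌉₊ * M ∧ ∀ n : ℕ, ∃ A : Finset ℝ,
        (∀ x ∈ A, x ∈ Icc (0 : ℝ) 1) ∧ IsOrbitSeparated dist (zigzagMap a) n ε A ∧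
          A.card = M ^ n := by
  obtain ⟨j, hj, hwε, hεw'⟩ := exists_lapWidth_zpow_le_lt hε hεw
  set l : ℝ := 2 ^ j
  set m := ⌈6 * (2 : ℝ) ^ (a / (1 - a))⌉₊
  set N := laps a l
  have hl : 0 < l := zpow_pos two_pos j
  have hl4 : l ≤ 1 / 4 := by
    calc l ≤ 2 ^ (-2 : ℤ) := zpow_le_zpow_right₀ one_le_two hj
      _ = 1 / 4 := by norm_num
  have hm : 6 * (2 : ℝ) ^ (a / (1 - a)) ≤ m := Nat.le_ceil _
  have hm1 : (1 : ℝ) ≤ m := le_trans (by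
    linarith [Real.one_le_rpow one_le_two (div_nonneg ha0 (sub_nonneg.2 ha1.le))]) hm
  have hw := lapWidth_pos (a := a) hl
  have hgap : ε < (2 * m - 1) * lapWidth a l := by
    calc ε < lapWidth a (2 * l) := by rwa [← two_zpow_add_one]
      _ ≤ 6 * 2 ^ (a / (1 - a)) * lapWidth a l := lapWidth_two_mul_le ha0 ha1 hl hl4
      _ ≤ (2 * m - 1) * lapWidth a l := by gcongr; linarith
  refine ⟨(N - 1) / (2 * m) + 1, Nat.succ_pos _, ?_, fun n => ?_⟩
  · have hNM : N ≤ 2 * m * ((N - 1) / (2 * m) + 1) := by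
      have := Nat.lt_mul_div_succ (N - 1) (b := 2 * m) (by positivity)
      have : 1 ≤ N := by exact_mod_cast one_le_laps (a := a) hl
      omega
    have hquarter : (1 : ℝ) / 4 ≤ N * ε ^ a := by
      calc (1 : ℝ) / 4 = 4 ^ (-1 : ℝ) := by norm_num
        _ ≤ 4 ^ (-a) := Real.rpow_le_rpow_of_exponent_le (by norm_num) (by linarith)
        _ ≤ N * lapWidth a l ^ a := rpow_neg_le_laps_mul_lapWidth_rpow ha1 hl
        _ ≤ N * ε ^ a := by gcongr
    calc ε ^ (-a) ≤ 4 * N := by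
          rw [Real.rpow_neg hε.le, inv_le_iff_one_le_mul₀ (by positivity)]; linarith
      _ ≤ 4 * (2 * m * ((N - 1) / (2 * m) + 1) : ℕ) := by gcongr
      _ = _ := by push_cast; ring
  · obtain ⟨A, hAJ, hA, hcard⟩ := zigzagMap_exists_isOrbitSeparated_dyadic hε.le hgap n
    have hJ1 : (2 : ℝ) ^ (j + 1) ≤ 1 := zpow_le_one_of_nonpos₀ one_le_two (by omega)
    exact ⟨A, fun x hx => ⟨hl.le.trans (hAJ hx).1, (hAJ hx).2.trans hJ1⟩, hA, hcard⟩

end LowerBound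

theorem mapsTo_zigzagMap_unitInterval (a : ℝ) : MapsTo (zigzagMap a) unitInterval unitInterval := by
  simpa using mapsTo_zigzagMap_Icc_zero a 0

def zigzagMapI (a : ℝ) : unitInterval → unitInterval :=
  fun x => ⟨zigzagMap a x, mapsTo_zigzagMap_unitInterval a x.2⟩

theorem isOrbitSeparated_zigzagMapI_iff {a ε : ℝ} {n : ℕ} {A : Finset unitInterval} :
    IsOrbitSeparated dI (zigzagMapI a) n ε A ↔
      IsOrbitSeparated dist (zigzagMap a) n ε (A.map (Function.Embedding.subtype _)) :=
  (IsOrbitSeparated.map_iff (d := dI) (φ := zigzagMapI a) _ (fun _ _ => rfl) fun _ => rfl).symm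

section ZigzagMapI

variable {a ε : ℝ}

theorem zigzagMapI_exists_card_le (ha0 : 0 ≤ a) (ha1 : a < 1) (hε : 0 < ε) (hε1 : ε ≤ 1) :
    ∃ C > 0, ∀ (n : ℕ) (A : Finset unitInterval), IsOrbitSeparated dI (zigzagMapI a) n ε A →
      (A.card : ℝ) ≤ C * (4 * ε ^ (-a)) ^ n := by
  obtain ⟨C, hC, hcard⟩ := zigzagMap_exists_card_le ha0 ha1 hε hε1
  refine ⟨C, hC, fun n A hA => ?_⟩
  simpa using hcard n _ (fun x hx => by obtain ⟨y, -, rfl⟩ := Finset.mem_map.1 hx; exact y.2)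
    (isOrbitSeparated_zigzagMapI_iff.1 hA)

theorem zigzagMapI_exists_isOrbitSeparated_card_eq_pow (ha0 : 0 ≤ a) (ha1 : a < 1) (hε : 0 < ε)
    (hεw : ε < lapWidth a (1 / 2)) : ∃ M : ℕ, 0 < M ∧
      ε ^ (-a) ≤ 8 * ⌈6 * (2 : ℝ) ^ (a / (1 - a))⌉₊ * M ∧ ∀ n : ℕ, ∃ A : Finset unitInterval,
        IsOrbitSeparated dI (zigzagMapI a) n ε A ∧ A.card = M ^ n := by
  classical
  obtain ⟨M, hM0, hMε, hMA⟩ := zigzagMap_exists_isOrbitSeparated_card_eq_pow ha0 ha1 hε hεw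
  refine ⟨M, hM0, hMε, fun n => ?_⟩
  obtain ⟨B, hB01, hB, hcard⟩ := hMA n
  have hmap : (B.subtype (· ∈ unitInterval)).map (Function.Embedding.subtype _) = B := by
    rw [Finset.subtype_map, Finset.filter_true_of_mem hB01]
  refine ⟨B.subtype (· ∈ unitInterval), ?_, ?_⟩
  · rw [isOrbitSeparated_zigzagMapI_iff, hmap]; exact hB
  · rw [← Finset.card_map, hmap, hcard]

theorem log_rpow_neg_eq_mul_abs_log (hε : 0 < ε) (hε1 : ε < 1) :
    Real.log (ε ^ (-a)) = a * |Real.log ε| := by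
  rw [Real.log_rpow hε, abs_of_neg (Real.log_neg hε hε1)]; ring

theorem sepExp_zigzagMapI_le (ha0 : 0 ≤ a) (ha1 : a < 1) (hε : 0 < ε) (hε1 : ε < 1) :
    sepExp dI (zigzagMapI a) ε ≤ Real.log 4 + a * |Real.log ε| := by
  obtain ⟨C, hC, hcard⟩ := zigzagMapI_exists_card_le ha0 ha1 hε hε1.le
  rw [← log_rpow_neg_eq_mul_abs_log hε hε1, ← Real.log_mul (by norm_num) (by positivity)]
  exact sepExp_le_log hC (by positivity) hcard

theorem sub_log_le_sepExp_zigzagMapI (ha0 : 0 ≤ a) (ha1 : a < 1) (hε : 0 < ε) (hε1 : ε < 1)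
    (hεw : ε < lapWidth a (1 / 2)) :
    a * |Real.log ε| - Real.log (8 * ⌈6 * (2 : ℝ) ^ (a / (1 - a))⌉₊) ≤
      sepExp dI (zigzagMapI a) ε := by
  obtain ⟨C, hC, hcard⟩ := zigzagMapI_exists_card_le ha0 ha1 hε hε1.le
  obtain ⟨M, hM0, hMε, hMA⟩ := zigzagMapI_exists_isOrbitSeparated_card_eq_pow ha0 ha1 hε hεw
  refine le_trans ?_ (log_le_sepExp hC (by positivity) hM0 hcard hMA)
  have hm : 0 < ⌈6 * (2 : ℝ) ^ (a / (1 - a))⌉₊ := Nat.one_le_ceil_iff.2 (by positivity)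
  rw [← log_rpow_neg_eq_mul_abs_log hε hε1, ← Real.log_div (by positivity) (by positivity)]
  exact Real.log_le_log (by positivity) (by rw [div_le_iff₀ (by positivity), mul_comm]; exact hMε)

theorem abs_sepExp_zigzagMapI_sub_le (ha0 : 0 ≤ a) (ha1 : a < 1) : ∃ C, ∀ᶠ ε in 𝓝[>] 0,
    |sepExp dI (zigzagMapI a) ε - (a * |Real.log ε|)| ≤ C := by
  set K : ℝ := 8 * ⌈6 * (2 : ℝ) ^ (a / (1 - a))⌉₊
  have hK : 0 ≤ Real.log K := by
    have : 1 ≤ ⌈6 * (2 : ℝ) ^ (a / (1 - a))⌉₊ := Nat.one_le_ceil_iff.2 (by positivity)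
    have : (1 : ℝ) ≤ ⌈6 * (2 : ℝ) ^ (a / (1 - a))⌉₊ := by exact_mod_cast this
    exact Real.log_nonneg (by linarith)
  have h4 : 0 ≤ Real.log 4 := Real.log_nonneg (by norm_num)
  refine ⟨Real.log 4 + Real.log K, ?_⟩
  filter_upwards [Ioo_mem_nhdsGT (lt_min (lapWidth_pos (a := a) one_half_pos) one_pos)] with
    ε ⟨hε, hεδ⟩
  have hεw : ε < lapWidth a (1 / 2) := hεδ.trans_le (min_le_left _ _)
  have hε1 : ε < 1 := hεδ.trans_le (min_le_right _ _)
  have hupper := sepExp_zigzagMapI_le ha0 ha1 hε hε1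
  have hlower := sub_log_le_sepExp_zigzagMapI ha0 ha1 hε hε1 hεw
  rw [abs_sub_le_iff]; constructor <;> linarith

end ZigzagMapI

/-- For every `a ∈ [0,1)`, with `α = 1 - a`, there exists an `α`-Hölder continuous map
`φ : [0,1] → [0,1]` whose lower and upper metric mean dimensions both equal `a`. -/
theorem exists_holder_map_with_mdim_eq (a : ℝ) (ha : a ∈ Set.Ico (0 : ℝ) 1) :
    ∃ φ : unitInterval → unitInterval, Continuous φ ∧
      (∃ K : ℝ, 0 < K ∧ ∀ x y : unitInterval,
        |(φ x : ℝ) - (φ y : ℝ)| ≤ K * |(x : ℝ) - (y : ℝ)| ^ (1 - a)) ∧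
      mdimLower dI φ = a ∧ mdimUpper dI φ = a := by
  obtain ⟨ha0, ha1⟩ := ha
  have hholder : ∀ x y : unitInterval,
      |(zigzagMapI a x : ℝ) - zigzagMapI a y| ≤ 7 * |(x : ℝ) - y| ^ (1 - a) :=
    fun x y => abs_zigzagMap_sub_le ha0 ha1 x.2 y.2
  obtain ⟨C, hC⟩ := abs_sepExp_zigzagMapI_sub_le ha0 ha1
  have hlim := tendsto_div_abs_log_of_abs_sub_le hC
  exact ⟨zigzagMapI a, continuous_of_dist_le_rpow (sub_pos.2 ha1) hholder,
    ⟨7, by norm_num, hholder⟩, hlim.liminf_eq, hlim.limsup_eq⟩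
end
end

section
/- Fix β > 1 and set C = 1/Σ_{k=1}^∞ k^{−β}, a_0 = 0 and a_n = Σ_{k=1}^n C/k^β for n ≥ 1, and I_n = [a_{n−1}, a_n]. Let g(x) = |1 − |3x − 1|| for x ∈ [0,1], and let T_n : I_n → [0,1] be the unique increasing affine bijection. Define φ_β : [0,1] → [0,1] by φ_β(x) = T_n^{−1}(g^n(T_n(x))) for x ∈ I_n, n ≥ 1. Then for every α ∈ (0,1), φ_β is not α-Hölder continuous: for every K > 0 there exist x ≠ y in [0,1] with |φ_β(x) − φ_β(y)| > K|x − y|^α. -/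
open Filter Set Topology

noncomputable section

/-- The full tent-like map `g(x) = |1 - |3x - 1||`, whose `m`-th iterate folds `[0,1]`
onto itself `3^m` times. -/
def gMap : ℝ → ℝ := fun x => abs (1 - abs (3 * x - 1))

/-- `a_n = Σ_{k=1}^n C/k^β` where `C = 1/Σ_{k=1}^∞ k^{-β}`. -/
def aSeq15 (β : ℝ) : ℕ → ℝ :=
  fun m => ∑ i ∈ Finset.range m,
    (1 / ∑' k : ℕ, 1 / ((k : ℝ) + 1) ^ β) / ((i : ℝ) + 1) ^ β

/-!
On `I_{n+1}`, of length `L = C (n+1)^{-β}`, the map `φ_β` is conjugate to `g^{n+1}`, which maps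
`[0, δ]`, `δ = 3^{-(n+1)}`, linearly onto `[0,1]`. Hence the points `a_n` and `a_n + δ L`, at
distance `δ L`, are sent to the two endpoints of `I_{n+1}`, at distance `L`. An `α`-Hölder bound
would force `L ≤ K (δ L)^α`, i.e. `3^{α(n+1)} L^{1-α} ≤ K`; but the exponential factor beats the
polynomial decay of `L^{1-α}`.
-/

open Real

lemma gMap_of_le_third {x : ℝ} (h0 : 0 ≤ x) (h1 : x ≤ 1 / 3) : gMap x = 3 * x := by
  rw [gMap, abs_of_nonpos (show 3 * x - 1 ≤ 0 by linarith), abs_of_nonneg (by linarith)]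
  ring

lemma gMap_iterate_zero (n : ℕ) : gMap^[n] 0 = 0 :=
  Function.iterate_fixed (by simp [gMap]) n

lemma gMap_iterate_inv_three_pow (n : ℕ) : gMap^[n] ((3 : ℝ)⁻¹ ^ n) = 1 := by
  induction n with
  | zero => rfl
  | succ n ih =>
    have hle : (3 : ℝ)⁻¹ ^ n ≤ 1 := pow_le_one₀ (by norm_num) (by norm_num)
    rw [Function.iterate_succ_apply, pow_succ', gMap_of_le_third (by positivity) (by linarith),
      ← mul_assoc, mul_inv_cancel₀ three_ne_zero, one_mul, ih]

def normConst (β : ℝ) : ℝ := 1 / ∑' k : ℕ, 1 / ((k : ℝ) + 1) ^ β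

lemma summable_one_div_nat_add_one_rpow {β : ℝ} (hβ : 1 < β) :
    Summable fun k : ℕ => 1 / ((k : ℝ) + 1) ^ β := by
  exact_mod_cast (summable_nat_add_iff 1).mpr (summable_one_div_nat_rpow.mpr hβ)

lemma normConst_pos {β : ℝ} (hβ : 1 < β) : 0 < normConst β :=
  one_div_pos.2 <| (summable_one_div_nat_add_one_rpow hβ).tsum_pos (fun _ => by positivity) 0
    (by positivity)

lemma aSeq15_succ (β : ℝ) (n : ℕ) :
    aSeq15 β (n + 1) = aSeq15 β n + normConst β / ((n : ℝ) + 1) ^ β :=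
  Finset.sum_range_succ _ _

lemma aSeq15_nonneg (β : ℝ) (n : ℕ) : 0 ≤ aSeq15 β n :=
  Finset.sum_nonneg fun _ _ => div_nonneg (one_div_nonneg.2 (tsum_nonneg fun _ => by positivity))
    (by positivity)

lemma aSeq15_le_one {β : ℝ} (hβ : 1 < β) (n : ℕ) : aSeq15 β n ≤ 1 := by
  have hS := summable_one_div_nat_add_one_rpow hβ
  have hsum : aSeq15 β n = (∑ i ∈ Finset.range n, 1 / ((i : ℝ) + 1) ^ β) /
      ∑' k : ℕ, 1 / ((k : ℝ) + 1) ^ β := by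
    rw [aSeq15, Finset.sum_div]
    exact Finset.sum_congr rfl fun _ _ => by ring
  rw [hsum, div_le_one (one_div_pos.1 (normConst_pos hβ))]
  exact hS.sum_le_tsum _ fun _ _ => by positivity

lemma tendsto_natCast_rpow_div_pow_rpow_atTop (p : ℝ) {r α : ℝ} (hr0 : 0 < r) (hr1 : r < 1)
    (hα : 0 < α) : Tendsto (fun m : ℕ => (m : ℝ) ^ p / (r ^ m) ^ α) atTop atTop := by
  have hb : 0 < -(α * log r) := by nlinarith [log_neg hr0 hr1]
  refine ((tendsto_exp_mul_div_rpow_atTop (-p) _ hb).comp tendsto_natCast_atTop_atTop).congr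
    fun m => ?_
  rw [Function.comp_apply, rpow_neg m.cast_nonneg, div_inv_eq_mul, rpow_def_of_pos (pow_pos hr0 m),
    log_pow, div_eq_mul_inv, ← exp_neg]
  ring_nf

lemma eventually_mul_rpow_lt_of_rpow_decay {C β r α : ℝ} (K : ℝ) (hC : 0 < C) (hr0 : 0 < r)
    (hr1 : r < 1) (hα : 0 < α) :
    ∀ᶠ m : ℕ in atTop, K * (C / (m : ℝ) ^ β * r ^ m) ^ α < C / (m : ℝ) ^ β := by
  have hlim := (Tendsto.const_mul_atTop (rpow_pos_of_pos hC (1 - α))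
    (tendsto_natCast_rpow_div_pow_rpow_atTop (-(β * (1 - α))) hr0 hr1 hα)).eventually_gt_atTop K
  filter_upwards [hlim, eventually_gt_atTop 0] with m hK hm
  set L := C / (m : ℝ) ^ β
  have hL : 0 < L := by positivity
  have hδ : 0 < r ^ m := pow_pos hr0 m
  have hpow : L ^ (1 - α) = C ^ (1 - α) * (m : ℝ) ^ (-(β * (1 - α))) := by
    rw [div_rpow hC.le (by positivity), ← rpow_mul m.cast_nonneg, rpow_neg m.cast_nonneg,
      div_eq_mul_inv]
  have hKδ : K * (r ^ m) ^ α < L ^ (1 - α) := by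
    rw [← lt_div_iff₀ (rpow_pos_of_pos hδ α), hpow, mul_div_assoc]
    exact hK
  calc K * (L * r ^ m) ^ α = L ^ α * (K * (r ^ m) ^ α) := by rw [mul_rpow hL.le hδ.le]; ring
    _ < L ^ α * L ^ (1 - α) := by gcongr
    _ = L := by rw [← rpow_add hL]; norm_num

theorem not_holder_path_example_general (β : ℝ) (hβ : 1 < β) (φ : unitInterval → unitInterval)
    (hhorse : ∀ n : ℕ, 1 ≤ n → ∀ x : unitInterval,
      (x : ℝ) ∈ Set.Icc (aSeq15 β (n - 1)) (aSeq15 β n) →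
      (φ x : ℝ) = aSeq15 β (n - 1) + (aSeq15 β n - aSeq15 β (n - 1)) *
        gMap^[n] (((x : ℝ) - aSeq15 β (n - 1)) / (aSeq15 β n - aSeq15 β (n - 1)))) :
    ∀ α ∈ Set.Ioo (0 : ℝ) 1, ∀ K : ℝ, 0 < K → ∃ x y : unitInterval, x ≠ y ∧
      K * |(x : ℝ) - (y : ℝ)| ^ α < |(φ x : ℝ) - (φ y : ℝ)| := by
  intro α hα K _
  obtain ⟨n, hn⟩ := ((tendsto_add_atTop_nat 1).eventually
    (eventually_mul_rpow_lt_of_rpow_decay K (normConst_pos hβ)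
      (by norm_num : (0 : ℝ) < 3⁻¹) (by norm_num) hα.1)).exists
  have hφ := hhorse (n + 1) le_add_self
  push_cast at hn
  simp only [Nat.add_sub_cancel, aSeq15_succ, add_sub_cancel_left] at hφ
  set a := aSeq15 β n
  set L := normConst β / ((n : ℝ) + 1) ^ β
  set δ := (3 : ℝ)⁻¹ ^ (n + 1)
  have hL : 0 < L := div_pos (normConst_pos hβ) (by positivity)
  have hLδ_pos : 0 < L * δ := by positivity
  have hLδ_le : L * δ ≤ L :=
    mul_le_of_le_one_right hL.le (pow_le_one₀ (by norm_num) (by norm_num))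
  have ha0 : 0 ≤ a := aSeq15_nonneg β n
  have haL : a + L ≤ 1 := aSeq15_succ β n ▸ aSeq15_le_one hβ (n + 1)
  refine ⟨⟨a, ha0, by linarith⟩, ⟨a + L * δ, by linarith, by linarith⟩,
    fun h => hLδ_pos.ne' (left_eq_add.1 (congrArg Subtype.val h)), ?_⟩
  rw [hφ _ ⟨le_rfl, show a ≤ a + L by linarith⟩,
    hφ _ ⟨show a ≤ a + L * δ by linarith, show a + L * δ ≤ a + L by linarith⟩]
  have hδ : (a + L * δ - a) / L = δ := by field_simp; ring
  rw [sub_self, zero_div, gMap_iterate_zero, hδ, gMap_iterate_inv_three_pow]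
  simpa [abs_of_pos hL, abs_of_pos hLδ_pos] using hn

/-- For `β > 1`, the map `φ_β` equal to `T_n⁻¹ ∘ g^n ∘ T_n` on each `I_n = [a_{n-1}, a_n]`
(with `a_n = Σ_{k=1}^n C/k^β`, `C = 1/Σ_{k≥1} k^{-β}`) is not `α`-Hölder continuous for
any `α ∈ (0,1)`. -/
theorem not_holder_path_example (β : ℝ) (hβ : 1 < β) (φ : unitInterval → unitInterval)
    (hφ : Continuous φ)
    (hhorse : ∀ n : ℕ, 1 ≤ n → ∀ x : unitInterval,
      (x : ℝ) ∈ Set.Icc (aSeq15 β (n - 1)) (aSeq15 β n) →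
      (φ x : ℝ) = aSeq15 β (n - 1) + (aSeq15 β n - aSeq15 β (n - 1)) *
        gMap^[n] (((x : ℝ) - aSeq15 β (n - 1)) / (aSeq15 β n - aSeq15 β (n - 1)))) :
    ∀ α ∈ Set.Ioo (0 : ℝ) 1, ∀ K : ℝ, 0 < K → ∃ x y : unitInterval, x ≠ y ∧
      K * |(x : ℝ) - (y : ℝ)| ^ α < |(φ x : ℝ) - (φ y : ℝ)| :=
  not_holder_path_example_general β hβ φ hhorse
end
end
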